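/- arXiv:2201.06306 — 7 statements merged into one kernel-verified Lean document; each statement's English description precedes it below -/
import Mathlib

section
/- Let σ₁, …, σ_n be a list of sequences over a finite set A with n ≤ |A| that is forward complete and is also a quasi-palindrome. Then the list is strongly complete. -/
/-- `ρ ∈ [A]_k`: a sequence over `A` of length `k` with pairwise distinct elements. -/
def DistinctSeq (A : Finset ℕ) (k : ℕ) (ρ : List ℕ) : Prop :=
  ρ.length = k ∧ ρ.Nodup ∧ ∀ a ∈ ρ, a ∈ A

/-- `σ` is `k`-complete over `A`: every member of `[A]_k` is a subsequence of `σ`. -/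
def IsKComplete (A : Finset ℕ) (k : ℕ) (σ : List ℕ) : Prop :=
  ∀ ρ : List ℕ, DistinctSeq A k ρ → ρ.Sublist σ

/-- `σ` is a supersequence over `A`: it contains every permutation of `A` as a
subsequence, i.e. it is `|A|`-complete. -/
def IsSupersequence (A : Finset ℕ) (σ : List ℕ) : Prop :=
  IsKComplete A A.card σ

/-- A list of sequences `σ₁, …, σ_n` is forward complete if for every `1 ≤ k ≤ n`,
the concatenation `σ₁σ₂⋯σ_k` is `k`-complete. -/
def ForwardComplete (A : Finset ℕ) (L : List (List ℕ)) : Prop :=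
  ∀ k, 1 ≤ k → k ≤ L.length → IsKComplete A k ((L.take k).flatten)

/-- A list of sequences `σ₁, …, σ_n` is backward complete if for every `1 ≤ k ≤ n`,
the concatenation `σ_{n-k+1}⋯σ_n` is `k`-complete. -/
def BackwardComplete (A : Finset ℕ) (L : List (List ℕ)) : Prop :=
  ∀ k, 1 ≤ k → k ≤ L.length → IsKComplete A k ((L.drop (L.length - k)).flatten)

/-- Strongly complete: both forward and backward complete. -/
def StronglyComplete (A : Finset ℕ) (L : List (List ℕ)) : Prop :=
  ForwardComplete A L ∧ BackwardComplete A L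

/-- A sequence `σ` over `A` is a quasi-palindrome if some bijection `B : A → A`
maps `σ` (elementwise) to its reverse, i.e. `B(σ[k]) = σ[l-k+1]` for all `1 ≤ k ≤ l`. -/
def QuasiPalindromeSeq (A : Finset ℕ) (σ : List ℕ) : Prop :=
  ∃ B : ℕ → ℕ, Set.BijOn B ↑A ↑A ∧ σ.map B = σ.reverse

/-- A list of sequences `σ₁, …, σ_n` is a quasi-palindrome if the concatenation
`σ₁σ₂⋯σ_n` is a quasi-palindrome and `length σ_k = length σ_{n-k+1}` for all `1 ≤ k ≤ n`. -/
def QuasiPalindromeList (A : Finset ℕ) (L : List (List ℕ)) : Prop :=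
  QuasiPalindromeSeq A L.flatten ∧
    ∀ k, 1 ≤ k → k ≤ L.length →
      (L.getD (k-1) []).length = (L.getD (L.length - k) []).length

/-
Reversing a sequence and renaming its letters by a bijection of `A` both preserve
`k`-completeness. In a quasi-palindromic list the block lengths form a palindrome, so the last
`k` blocks have the same total length as the first `k`; hence the bijection `B` carries the
concatenation of the first `k` blocks onto the reverse of the concatenation of the last `k`,
which is therefore `k`-complete whenever the former is.
-/

theorem DistinctSeq.reverse {A : Finset ℕ} {k : ℕ} {ρ : List ℕ} (h : DistinctSeq A k ρ) :
    DistinctSeq A k ρ.reverse :=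
  ⟨by rw [List.length_reverse, h.1], List.nodup_reverse.2 h.2.1,
    fun a ha => h.2.2 a (List.mem_reverse.1 ha)⟩

theorem DistinctSeq.map {A : Finset ℕ} {k : ℕ} {ρ : List ℕ} {f : ℕ → ℕ}
    (hf : Set.MapsTo f ↑A ↑A) (hinj : Set.InjOn f ↑A) (h : DistinctSeq A k ρ) :
    DistinctSeq A k (ρ.map f) := by
  obtain ⟨hlen, hnodup, hmem⟩ := h
  refine ⟨by rw [List.length_map, hlen], ?_, ?_⟩
  · exact hnodup.map_on fun x hx y hy => hinj (hmem x hx) (hmem y hy)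
  · simp only [List.mem_map, forall_exists_index, and_imp, forall_apply_eq_imp_iff₂]
    exact fun a ha => hf (hmem a ha)

theorem IsKComplete.reverse {A : Finset ℕ} {k : ℕ} {σ : List ℕ} (h : IsKComplete A k σ) :
    IsKComplete A k σ.reverse := fun ρ hρ => by
  simpa using (h ρ.reverse hρ.reverse).reverse

theorem IsKComplete.map {A : Finset ℕ} {k : ℕ} {σ : List ℕ} {B : ℕ → ℕ}
    (hB : Set.BijOn B ↑A ↑A) (h : IsKComplete A k σ) : IsKComplete A k (σ.map B) := by
  intro ρ hρ
  have hinv := hB.invOn_invFunOn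
  have hpre : (ρ.map (Function.invFunOn B ↑A)).map B = ρ := by
    rw [List.map_map]
    exact (List.map_congr_left fun a ha => hinv.2 (hρ.2.2 a ha)).trans (List.map_id ρ)
  rw [← hpre]
  exact (h _ (hρ.map hB.surjOn.mapsTo_invFunOn hinv.2.injOn)).map B

theorem QuasiPalindromeList.reverse_map_length {A : Finset ℕ} {L : List (List ℕ)}
    (h : QuasiPalindromeList A L) : (L.map List.length).reverse = L.map List.length := by
  refine List.ext_getElem (by simp) fun i hi _ => ?_
  simp only [List.length_reverse, List.length_map] at hi
  have hlen := h.2 (i + 1) (by omega) (by omega)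
  rw [List.getD_eq_getElem _ _ (by omega), List.getD_eq_getElem _ _ (by omega)] at hlen
  simp only [List.getElem_reverse, List.getElem_map, List.length_map]
  convert hlen.symm using 3 <;> omega

theorem List.sum_drop_length_sub_of_reverse_eq {M : Type*} [AddCommMonoid M] {l : List M}
    (hl : l.reverse = l) (k : ℕ) : (l.drop (l.length - k)).sum = (l.take k).sum := by
  rw [← List.sum_reverse, ← List.take_reverse, hl]

theorem List.map_take_eq_reverse_drop_of_map_eq_reverse {α : Type*} {f : α → α} {w : List α}
    (hw : w.map f = w.reverse) (m : ℕ) :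
    (w.take m).map f = (w.drop (w.length - m)).reverse := by
  rw [List.map_take, hw, List.take_reverse]

theorem QuasiPalindromeList.flatten_drop_eq_reverse_map_flatten_take {A : Finset ℕ}
    {L : List (List ℕ)} {B : ℕ → ℕ} (h : QuasiPalindromeList A L)
    (hB : L.flatten.map B = L.flatten.reverse) (k : ℕ) :
    (L.drop (L.length - k)).flatten = ((L.take k).flatten.map B).reverse := by
  have hsum : (L.drop (L.length - k)).flatten.length = (L.take k).flatten.length := by
    simpa only [List.length_flatten, List.map_drop, List.map_take, List.length_map] using
      List.sum_drop_length_sub_of_reverse_eq h.reverse_map_length k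
  have hprefix : L.flatten.take (L.take k).flatten.length = (L.take k).flatten := by
    have hsplit : L.flatten = (L.take k).flatten ++ (L.drop k).flatten := by
      rw [← List.flatten_append, List.take_append_drop]
    rw [hsplit, List.take_left' rfl]
  have hsuffix :
      L.flatten.drop (L.flatten.length - (L.take k).flatten.length) =
        (L.drop (L.length - k)).flatten := by
    have hsplit :
        L.flatten = (L.take (L.length - k)).flatten ++ (L.drop (L.length - k)).flatten := by
      rw [← List.flatten_append, List.take_append_drop]
    rw [hsplit, List.length_append, ← hsum, Nat.add_sub_cancel, List.drop_left' rfl]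
  rw [← hprefix, List.map_take_eq_reverse_drop_of_map_eq_reverse hB, hsuffix,
    List.reverse_reverse]

theorem forwardComplete_quasiPalindrome_stronglyComplete_general
    (A : Finset ℕ) (L : List (List ℕ))
    (hfc : ForwardComplete A L) (hqp : QuasiPalindromeList A L) :
    StronglyComplete A L := by
  refine ⟨hfc, fun k hk1 hkn => ?_⟩
  obtain ⟨B, hB, hBL⟩ := hqp.1
  rw [hqp.flatten_drop_eq_reverse_map_flatten_take hBL k]
  exact ((hfc k hk1 hkn).map hB).reverse

/-- **Theorem 3.** A forward complete list of sequences over a finite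
set `A` (with `n ≤ |A|`) which is a quasi-palindrome is strongly complete. -/
theorem forwardComplete_quasiPalindrome_stronglyComplete
    (A : Finset ℕ) (L : List (List ℕ)) (hn : L.length ≤ A.card)
    (hover : ∀ σ ∈ L, ∀ a ∈ σ, a ∈ A)
    (hfc : ForwardComplete A L) (hqp : QuasiPalindromeList A L) :
    StronglyComplete A L :=
  forwardComplete_quasiPalindrome_stronglyComplete_general A L hfc hqp
end

section
/- Let σ₁, …, σ_n be a list of sequences over a finite set A that is strongly complete, with n = |A|, and let x be a letter not in A. Then the sequence x σ₁ x σ₂ x ⋯ x σ_n x (the concatenation of σ₁, …, σ_n with one occurrence of x before, between, and after them, n+1 occurrences of x in total) is a supersequence over A ∪ {x}. -/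
/-!
A permutation of `A ∪ {x}` has the form `ρ₁ x ρ₂` with `|ρ₁| = i` and `|ρ₂| = n - i`, where
`ρ₁` and `ρ₂` are repetition-free sequences over `A`. Forward completeness embeds `ρ₁` into
`σ₁⋯σ_i` and backward completeness embeds `ρ₂` into `σ_{i+1}⋯σ_n`; the copy of `x` between
`σ_i` and `σ_{i+1}` (or the leading one when `i = 0`) then embeds the middle letter.
-/

namespace List

variable {α : Type*}

theorem cons_flatten_map_append_singleton (x : α) (M : List (List α)) :
    x :: (M.map (· ++ [x])).flatten = (M.map (x :: ·)).flatten ++ [x] := by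
  induction M with
  | nil => rfl
  | cons m M ih => simp [ih]

theorem flatten_sublist_flatten_map_append (M : List (List α)) (τ : List α) :
    M.flatten <+ (M.map (· ++ τ)).flatten := by
  induction M with
  | nil => exact Sublist.refl _
  | cons m M ih => simpa using (sublist_append_left m τ).append ih

theorem flatten_sublist_flatten_map_cons (M : List (List α)) (x : α) :
    M.flatten <+ (M.map (x :: ·)).flatten := by
  induction M with
  | nil => exact Sublist.refl _
  | cons m M ih => simpa using ((sublist_cons_self x m).append ih)

theorem append_sublist_interpose {ρ₁ ρ₂ : List α} {L : List (List α)} (x : α) (i : ℕ)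
    (h₁ : ρ₁ <+ (L.take i).flatten) (h₂ : ρ₂ <+ (L.drop i).flatten) :
    ρ₁ ++ x :: ρ₂ <+ x :: (L.map (· ++ [x])).flatten := by
  have hsplit : x :: (L.map (· ++ [x])).flatten =
      (x :: ((L.take i).map (· ++ [x])).flatten) ++ ((L.drop i).map (· ++ [x])).flatten := by
    rw [cons_append, ← flatten_append, ← map_append, take_append_drop]
  have hleft : ρ₁ ++ [x] <+ x :: ((L.take i).map (· ++ [x])).flatten := by
    rw [cons_flatten_map_append_singleton]
    exact (h₁.trans (flatten_sublist_flatten_map_cons _ x)).append_right [x]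
  rw [hsplit, ← singleton_append, ← append_assoc]
  exact hleft.append (h₂.trans (flatten_sublist_flatten_map_append _ [x]))

end List

theorem isKComplete_zero (A : Finset ℕ) (σ : List ℕ) : IsKComplete A 0 σ := by
  rintro ρ ⟨hρ, -, -⟩
  rw [List.length_eq_zero_iff.mp hρ]
  exact List.nil_sublist σ

theorem ForwardComplete.isKComplete_take {A : Finset ℕ} {L : List (List ℕ)}
    (h : ForwardComplete A L) {k : ℕ} (hk : k ≤ L.length) :
    IsKComplete A k (L.take k).flatten := by
  rcases Nat.eq_zero_or_pos k with rfl | hpos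
  · exact isKComplete_zero A _
  · exact h k hpos hk

theorem BackwardComplete.isKComplete_drop {A : Finset ℕ} {L : List (List ℕ)}
    (h : BackwardComplete A L) {i : ℕ} (hi : i ≤ L.length) :
    IsKComplete A (L.length - i) (L.drop i).flatten := by
  rcases Nat.eq_zero_or_pos (L.length - i) with h0 | hpos
  · rw [h0]
    exact isKComplete_zero A _
  · simpa [Nat.sub_sub_self hi] using h (L.length - i) hpos (Nat.sub_le _ _)

theorem DistinctSeq.mem_of_length_eq_card {A : Finset ℕ} {ρ : List ℕ}
    (hρ : DistinctSeq A A.card ρ) {a : ℕ} (ha : a ∈ A) : a ∈ ρ := by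
  obtain ⟨hlen, hnd, hmem⟩ := hρ
  have hsub : ρ.toFinset ⊆ A := fun b hb => hmem b (List.mem_toFinset.mp hb)
  have heq : ρ.toFinset = A :=
    Finset.eq_of_subset_of_card_le hsub (by rw [List.toFinset_card_of_nodup hnd, hlen])
  exact List.mem_toFinset.mp (heq ▸ ha)

theorem DistinctSeq.of_append_cons {A : Finset ℕ} {k x : ℕ} {ρ₁ ρ₂ : List ℕ}
    (hρ : DistinctSeq (insert x A) k (ρ₁ ++ x :: ρ₂)) :
    DistinctSeq A ρ₁.length ρ₁ ∧ DistinctSeq A ρ₂.length ρ₂ := by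
  obtain ⟨-, hnd, hmem⟩ := hρ
  obtain ⟨hnd₁, hnd₂, hdisj⟩ := List.nodup_append.mp hnd
  obtain ⟨hx₂, hnd₂⟩ := List.nodup_cons.mp hnd₂
  have hx₁ : x ∉ ρ₁ := fun h => hdisj x h x List.mem_cons_self rfl
  have hmem' : ∀ a ∈ ρ₁ ++ x :: ρ₂, a ≠ x → a ∈ A := fun a ha hax =>
    (Finset.mem_insert.mp (hmem a ha)).resolve_left hax
  refine ⟨⟨rfl, hnd₁, fun a ha => ?_⟩, ⟨rfl, hnd₂, fun a ha => ?_⟩⟩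
  · exact hmem' a (by simp [ha]) (by rintro rfl; exact hx₁ ha)
  · exact hmem' a (by simp [ha]) (by rintro rfl; exact hx₂ ha)

theorem interpose_isSupersequence_general (A : Finset ℕ) (L : List (List ℕ))
    (hlen : L.length = A.card)
    (hsc : StronglyComplete A L) (x : ℕ) (hx : x ∉ A) :
    IsSupersequence (insert x A) (x :: (L.map (fun σ => σ ++ [x])).flatten) := by
  intro ρ hρ
  have hcard : (insert x A).card = A.card + 1 := Finset.card_insert_of_notMem hx
  obtain ⟨ρ₁, ρ₂, rfl⟩ :=
    List.append_of_mem (hρ.mem_of_length_eq_card (Finset.mem_insert_self x A))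
  obtain ⟨h₁, h₂⟩ := hρ.of_append_cons
  have hlenρ : ρ₁.length + ρ₂.length = L.length := by
    have := hρ.1
    simp only [List.length_append, List.length_cons, hcard] at this
    omega
  have hlen₂ : ρ₂.length = L.length - ρ₁.length := by omega
  refine List.append_sublist_interpose x ρ₁.length
    (hsc.1.isKComplete_take (by omega) ρ₁ h₁) ?_
  exact hsc.2.isKComplete_drop (by omega) ρ₂ (hlen₂ ▸ h₂)

/-- **Theorem 4.** If `σ₁, …, σ_n` is a strongly complete list over `A`
with `n = |A|` and `x ∉ A`, then `x σ₁ x σ₂ x ⋯ x σ_n x` is a supersequence over `A ∪ {x}`. -/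
theorem interpose_isSupersequence (A : Finset ℕ) (L : List (List ℕ))
    (hover : ∀ σ ∈ L, ∀ a ∈ σ, a ∈ A) (hlen : L.length = A.card)
    (hsc : StronglyComplete A L) (x : ℕ) (hx : x ∉ A) :
    IsSupersequence (insert x A) (x :: (L.map (fun σ => σ ++ [x])).flatten) :=
  interpose_isSupersequence_general A L hlen hsc x hx
end

section
/- Let n > 3 and let σ₁, …, σ_n be the T_1(n) list of sequences over A = {1, 2, …, n}. For every integer k with 1 < k ≤ n and every ρ ∈ [A]_k whose last element ρ[k] equals the last element of σ_{k−1}, ρ is a subsequence of the concatenation σ₁σ₂⋯σ_{k−1}. -/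
/-- The `T₁(n)` sequences (1-indexed): `T1 n k` is the `k`-th sequence `σ_k`.
`σ₁ = ⟨1,…,n⟩`, `σ₂ = ⟨1,…,n-1⟩`, for `2 < k < n`,
`σ_k = σ_{k-2}[-1] · σ_{k-1}[1,-2]`, and `σ_n = σ_{n-2}[-1] · σ_{n-1}[1,-1]`. -/
def T1 (n : ℕ) : ℕ → List ℕ
  | 0 => []
  | 1 => List.range' 1 n
  | 2 => List.range' 1 (n-1)
  | (k+3) =>
      (T1 n (k+1)).getLastD 0 ::
        (if k + 3 = n then T1 n (k+2) else (T1 n (k+2)).dropLast)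

/-- The `T₁(n)` list of sequences `σ₁, σ₂, …, σ_n`. -/
def T1List (n : ℕ) : List (List ℕ) := (List.range n).map (fun i => T1 n (i+1))

/-!
For `1 ≤ j < n` the sequence `σ_j` is `n+3-j, …, n, 1, …, n+1-j`: it contains every letter except
`n+2-j` (for `j ≥ 2` the last letter of `σ_{j-1}`) and ends in `n+1-j`. By induction on `j`, `σ₁⋯σ_j` is
`j`-complete and contains every `ρ ∈ [A]_{j+1}` ending in `n+1-j`. In the step, split off the last
letter `a` of `ρ`: if `a` is the last letter of `σ_j` then `ρ` already lies in `σ₁⋯σ_j`, otherwise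
`a ∈ σ_{j+1}`. Likewise, for `ρ = τ b c` with `c = n-j`, either `b = n+1-j` and `τ b` lies in
`σ₁⋯σ_j`, or the pair `b c` is a subsequence of `σ_{j+1}`.
-/

section T1

open List

theorem distinctSeq_concat_iff {A : Finset ℕ} {k a : ℕ} {l : List ℕ} :
    DistinctSeq A (k + 1) (l ++ [a]) ↔ DistinctSeq A k l ∧ a ∈ A ∧ a ∉ l := by
  simp only [DistinctSeq, length_append, length_singleton, Nat.add_right_cancel_iff,
    nodup_append_comm (l₁ := l), singleton_append, nodup_cons, mem_append, mem_singleton,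
    or_imp, forall_and, forall_eq]
  tauto

theorem pair_sublist_range' {s m b c : ℕ} (hb : s ≤ b) (hbc : b < c) (hc : c < s + m) :
    [b, c].Sublist (range' s m) :=
  sublist_of_subperm_of_pairwise (r := (· ≤ ·))
    (Nodup.subperm (by simpa using hbc.ne) (by simp [subset_def]; omega))
    (by simpa using hbc.le) ((pairwise_lt_range' (s := s) (n := m)).imp le_of_lt)

-- At `j = 1` the truncated `j - 2 = 0` makes the first block empty.
theorem T1_eq_range' {n : ℕ} : ∀ {j : ℕ}, 1 ≤ j → j < n →
    T1 n j = range' (n + 3 - j) (j - 2) ++ range' 1 (n + 1 - j)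
  | 1, _, _ => by simp [T1]
  | 2, _, _ => by simp [T1]
  | k + 3, _, h => by
    obtain ⟨m, rfl⟩ : ∃ m, n = k + m + 4 := ⟨n - k - 4, by omega⟩
    rw [T1, if_neg (by omega), T1_eq_range' (j := k + 1) (by omega) (by omega),
      T1_eq_range' (j := k + 2) (by omega) (by omega)]
    simp only [show k + m + 4 + 1 - (k + 1) = m + 3 + 1 by omega,
      show k + m + 4 + 1 - (k + 2) = m + 2 + 1 by omega,
      show k + m + 4 + 1 - (k + 3) = m + 2 by omega,
      show k + m + 4 + 3 - (k + 2) = m + 5 by omega,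
      show k + m + 4 + 3 - (k + 3) = m + 4 by omega,
      show k + 3 - 2 = k + 1 by omega, show k + 2 - 2 = k by omega,
      range'_concat (n := m + 3), range'_concat (n := m + 2), ← append_assoc,
      getLastD_concat, dropLast_concat, range'_succ (s := m + 4)]
    grind

variable {n j : ℕ}

theorem getLastD_T1 (hj : 1 ≤ j) (hjn : j < n) : (T1 n j).getLastD 0 = n + 1 - j := by
  rw [T1_eq_range' hj hjn, show n + 1 - j = n - j + 1 by omega, range'_concat,
    ← append_assoc, getLastD_concat]
  omega

theorem mem_T1 {a : ℕ} (hj : 1 ≤ j) (hjn : j < n) (ha : a ∈ Finset.Icc 1 n)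
    (ha' : a ≠ n + 2 - j) : a ∈ T1 n j := by
  rw [Finset.mem_Icc] at ha
  rw [T1_eq_range' hj hjn, mem_append, mem_range'_1, mem_range'_1]
  omega

theorem pair_sublist_T1 {b : ℕ} (hj : 1 ≤ j) (hjn : j < n) (hb : b ∈ Finset.Icc 1 n)
    (hb₁ : b ≠ n + 1 - j) (hb₂ : b ≠ n + 2 - j) : [b, n + 1 - j].Sublist (T1 n j) := by
  rw [Finset.mem_Icc] at hb
  rw [T1_eq_range' hj hjn]
  rcases lt_or_gt_of_ne hb₁ with hlt | hgt
  · exact (pair_sublist_range' hb.1 hlt (by omega)).trans (sublist_append_right _ _)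
  · exact (singleton_sublist.2 (by rw [mem_range'_1]; omega)).append
      (singleton_sublist.2 (by rw [mem_range'_1]; omega))

def T1Concat (n j : ℕ) : List ℕ := ((T1List n).take j).flatten

theorem T1Concat_succ (h : j < n) : T1Concat n (j + 1) = T1Concat n j ++ T1 n (j + 1) := by
  simp [T1Concat, T1List, take_add_one, h]

def T1LastLetterSublist (n j : ℕ) : Prop :=
  ∀ τ, DistinctSeq (Finset.Icc 1 n) (j + 1) (τ ++ [n + 1 - j]) →
    (τ ++ [n + 1 - j]).Sublist (T1Concat n j)

theorem isKComplete_T1Concat_succ (h : j + 1 < n)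
    (hP : IsKComplete (Finset.Icc 1 n) j (T1Concat n j)) (hQ : T1LastLetterSublist n j) :
    IsKComplete (Finset.Icc 1 n) (j + 1) (T1Concat n (j + 1)) := by
  intro ρ hρ
  obtain rfl | ⟨ρ', a, rfl⟩ := ρ.eq_nil_or_concat'
  · exact nil_sublist _
  obtain ⟨hρ', ha, -⟩ := distinctSeq_concat_iff.1 hρ
  rw [T1Concat_succ (by omega : j < n)]
  by_cases hlast : a = n + 1 - j
  · subst hlast
    exact (hQ ρ' hρ).trans (sublist_append_left _ _)
  · exact (hP ρ' hρ').append (singleton_sublist.2 (mem_T1 (by omega) h ha (by omega)))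

theorem T1LastLetterSublist.succ (h : j + 1 < n)
    (hP : IsKComplete (Finset.Icc 1 n) j (T1Concat n j)) (hQ : T1LastLetterSublist n j) :
    T1LastLetterSublist n (j + 1) := by
  intro τ hτ
  obtain ⟨hτ, hc, hcτ⟩ := distinctSeq_concat_iff.1 hτ
  obtain rfl | ⟨τ', b, rfl⟩ := τ.eq_nil_or_concat'
  · simp [DistinctSeq] at hτ
  obtain ⟨hτ', hb, -⟩ := distinctSeq_concat_iff.1 hτ
  have hbc : b ≠ n + 1 - (j + 1) := fun hbc => hcτ (by simp [hbc])
  rw [T1Concat_succ (by omega : j < n)]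
  by_cases hprev : b = n + 1 - j
  · subst hprev
    exact (hQ τ' hτ).append (singleton_sublist.2 (mem_T1 (by omega) h hc (by omega)))
  · rw [append_assoc]
    exact (hP τ' hτ').append (pair_sublist_T1 (by omega) h hb hbc (by omega))

-- At `j = 0` the second claim is vacuous: its last letter `n + 1` is not in `A`.
theorem isKComplete_T1Concat_and_T1LastLetterSublist :
    ∀ {j}, j < n → IsKComplete (Finset.Icc 1 n) j (T1Concat n j) ∧ T1LastLetterSublist n j
  | 0, _ => ⟨fun ρ hρ => by simp [length_eq_zero_iff.1 hρ.1],
      fun τ hτ => by simpa using hτ.2.2 _ (mem_concat_self ..)⟩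
  | j + 1, h =>
    have ⟨hP, hQ⟩ := isKComplete_T1Concat_and_T1LastLetterSublist (j := j) (by omega)
    ⟨isKComplete_T1Concat_succ h hP hQ, T1LastLetterSublist.succ h hP hQ⟩

end T1

theorem T1_last_letter_sublist_general (n : ℕ) (k : ℕ) (hk1 : 1 < k) (hk2 : k ≤ n)
    (ρ : List ℕ) (hρ : DistinctSeq (Finset.Icc 1 n) k ρ)
    (hlast : ρ.getLastD 0 = (T1 n (k-1)).getLastD 0) :
    ρ.Sublist (((T1List n).take (k-1)).flatten) := by
  obtain ⟨j, rfl⟩ : ∃ j, k = j + 1 := ⟨k - 1, by omega⟩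
  obtain rfl | ⟨τ, c, rfl⟩ := ρ.eq_nil_or_concat'
  · simp [DistinctSeq] at hρ
  rw [List.getLastD_concat, getLastD_T1 (by omega) (by omega)] at hlast
  subst hlast
  exact (isKComplete_T1Concat_and_T1LastLetterSublist (by omega)).2 τ hρ

/-- **Lemma 7, first part.** For the `T₁(n)` list over `A = {1,…,n}`,
`n > 3`: for every `1 < k ≤ n` and every `ρ ∈ [A]_k` whose last element equals the
last element of `σ_{k-1}`, `ρ` is a subsequence of `σ₁σ₂⋯σ_{k-1}`. -/
theorem T1_last_letter_sublist (n : ℕ) (hn : 3 < n) (k : ℕ) (hk1 : 1 < k) (hk2 : k ≤ n)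
    (ρ : List ℕ) (hρ : DistinctSeq (Finset.Icc 1 n) k ρ)
    (hlast : ρ.getLastD 0 = (T1 n (k-1)).getLastD 0) :
    ρ.Sublist (((T1List n).take (k-1)).flatten) :=
  T1_last_letter_sublist_general n k hk1 hk2 ρ hρ hlast
end

section
/- For every integer n > 3, the T_1(n) list of sequences is forward complete over A = {1, 2, …, n}. -/
theorem List.sublist_flatten_of_isChain {α : Type*} {L : List (List α)} :
    ∀ {ρ τ : List α}, ρ.Nodup → ρ.length ≤ L.length + 1 → (∀ a ∈ ρ, a ∈ τ) →
      (τ :: L).IsChain (fun u v => ∀ b ∈ ρ, b ∈ v ∨ u.getLast? = some b) →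
      ρ.Sublist (τ :: L).flatten := by
  induction L with
  | nil =>
    rintro (_ | ⟨a, _ | _⟩) τ - hlen hhead -
    · exact nil_sublist _
    · simpa using hhead a mem_cons_self
    · simp at hlen
  | cons τ₂ L ih =>
    rintro (_ | ⟨a, ρ⟩) τ hnd hlen hhead hchain
    · exact nil_sublist _
    obtain ⟨t₁, t₂, rfl⟩ := append_of_mem (hhead a mem_cons_self)
    obtain ⟨hlink, hrest⟩ := isChain_cons_cons.mp hchain
    obtain ⟨hlink₂, hchain₂⟩ := isChain_cons.mp hrest
    have hsub : ρ.Sublist ((t₂ ++ τ₂) :: L).flatten := by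
      refine ih hnd.of_cons (by simpa using hlen) ?_ ?_
      · intro b hb
        rcases hlink b (mem_cons_of_mem a hb) with h | h
        · exact mem_append_right t₂ h
        · rw [getLast?_append_cons] at h
          rcases mem_cons.mp (mem_of_getLast? h) with rfl | h
          · exact absurd hb (nodup_cons.mp hnd).1
          · exact mem_append_left τ₂ h
      · refine isChain_cons.mpr ⟨fun τ₃ hτ₃ b hb => ?_, hchain₂.imp ?_⟩
        · rcases hlink₂ τ₃ hτ₃ b (mem_cons_of_mem a hb) with h | h
          · exact .inl h
          · right; simp [getLast?_append, h]
        · exact fun u v h b hb => h b (mem_cons_of_mem a hb)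
    simpa using (hsub.cons_cons a).trans (sublist_append_right t₁ _)

theorem List.getLast?_append_range'_one (l : List ℕ) {m : ℕ} (hm : m ≠ 0) :
    (l ++ List.range' 1 m).getLast? = some m := by
  simp [List.getLast?_append, List.getLast?_range', hm]

theorem T1_succ_eq (n : ℕ) : ∀ k, k + 1 < n →
    T1 n (k + 1) = List.range' (n + 2 - k) (k - 1) ++ List.range' 1 (n - k)
  | 0, _ => by simp [T1]
  | 1, _ => by simp [T1]
  | k + 2, hk => by
    have hlast : (T1 n (k + 1)).getLastD 0 = n - k := by
      rw [T1_succ_eq n k (by omega), List.getLastD_eq_getLast?,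
        List.getLast?_append_range'_one _ (by omega), Option.getD_some]
    have hdrop : (T1 n (k + 2)).dropLast =
        List.range' (n + 1 - k) k ++ List.range' 1 (n - (k + 2)) := by
      rw [T1_succ_eq n (k + 1) (by omega), show n - (k + 1) = n - (k + 2) + 1 by omega,
        List.range'_concat, ← List.append_assoc, List.dropLast_concat,
        show n + 2 - (k + 1) = n + 1 - k by omega, Nat.add_sub_cancel]
    rw [show k + 2 + 1 = k + 3 from rfl, T1, if_neg (by omega), hlast, hdrop, ← List.cons_append,
      show n + 1 - k = n - k + 1 by omega, ← List.range'_succ, show n + 2 - (k + 2) = n - k by omega]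
    rfl

theorem T1_getLast? (n : ℕ) {k : ℕ} (hk : k + 1 < n) : (T1 n (k + 1)).getLast? = some (n - k) := by
  rw [T1_succ_eq n k hk, List.getLast?_append_range'_one _ (by omega)]

theorem T1_self (n : ℕ) (hn : 3 ≤ n) : T1 n n = List.range' 3 (n - 2) ++ [1, 2] := by
  obtain ⟨k, rfl⟩ := Nat.exists_eq_add_of_le' hn
  rw [T1, if_pos rfl, List.getLastD_eq_getLast?, T1_getLast? _ (by omega), Option.getD_some,
    T1_succ_eq _ (k + 1) (by omega), show k + 3 - 2 = k + 1 by omega]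
  simp [List.range'_succ]

theorem mem_T1_succ_or_getLast?_eq (n : ℕ) (hn : 3 ≤ n) {j b : ℕ} (hj : j + 2 ≤ n)
    (hb₁ : 1 ≤ b) (hb₂ : b ≤ n) :
    b ∈ T1 n (j + 2) ∨ (T1 n (j + 1)).getLast? = some b := by
  rcases hj.eq_or_lt with hj | hj
  · left
    rw [hj, T1_self n hn]
    simp only [List.mem_append, List.mem_range'_1, List.mem_cons]
    omega
  · rw [T1_succ_eq n (j + 1) hj, T1_getLast? n (by omega), Option.some.injEq]
    simp only [List.mem_append, List.mem_range'_1]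
    omega

/-- **Lemma 7, second part.** For every integer `n > 3`, the `T₁(n)`
list of sequences is forward complete over `A = {1,…,n}`. -/
theorem T1List_forwardComplete (n : ℕ) (hn : 3 < n) :
    ForwardComplete (Finset.Icc 1 n) (T1List n) := by
  rintro (_ | k) hk hkn ρ ⟨hlen, hnd, hA⟩
  · omega
  simp only [T1List, List.length_map, List.length_range] at hkn
  have hρ : ∀ b ∈ ρ, 1 ≤ b ∧ b ≤ n := fun b hb => Finset.mem_Icc.mp (hA b hb)
  have hchain : ((List.range (k + 1)).map fun i => T1 n (i + 1)).IsChain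
      (fun u v => ∀ b ∈ ρ, b ∈ v ∨ u.getLast? = some b) := by
    rw [List.isChain_map, List.isChain_range_succ]
    exact fun j hj b hb => mem_T1_succ_or_getLast?_eq n hn.le (by omega) (hρ b hb).1 (hρ b hb).2
  rw [T1List, ← List.map_take, List.take_range, min_eq_left hkn]
  rw [List.range_succ_eq_map, List.map_cons] at hchain ⊢
  refine List.sublist_flatten_of_isChain hnd (by simp [hlen]) (fun b hb => ?_) hchain
  exact List.mem_range'_1.mpr (by have := hρ b hb; omega)
end

section
/- For every integer n > 3, the T_1(n) list of sequences over A = {1, 2, …, n} is a quasi-palindrome; in particular the bijection B defined by B(σ₁[i]) = σ_n[n−i+1] for all 1 ≤ i ≤ n maps σ_k to the reverse of σ_{n−k+1} for every 1 ≤ k ≤ n. -/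
lemma range'_map_sub (c : ℕ) : ∀ (b a : ℕ), a + b ≤ c + 1 →
    (List.range' a b).map (fun x => c - x) = (List.range' (c + 1 - (a+b)) b).reverse := by
  intro b
  induction b with
  | zero => simp
  | succ b ih =>
    intro a h
    rw [List.range'_succ, List.map_cons, ih (a+1) (by omega)]
    have h1 : c + 1 - (a + (b+1)) = (c + 1 - (a + 1 + b)) := by omega
    rw [h1, List.range'_concat, List.reverse_append]
    simp only [List.reverse_singleton, List.singleton_append]
    congr 1
    omega

lemma T1_closed (n : ℕ) (hn : 3 < n) : ∀ k, 1 ≤ k → k ≤ n-1 →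
    T1 n k = List.range' (n-k+3) (k-2) ++ List.range' 1 (n-k+1) := by
  intro k
  induction k using Nat.strong_induction_on with
  | _ k ih =>
    match k with
    | 0 => intro h _; omega
    | 1 => intro _ _; simp [T1]; congr 1; omega
    | 2 => intro _ _; simp [T1]; congr 1; omega
    | (m+3) =>
      intro h1 h2
      have hne : ¬ (m + 3 = n) := by omega
      rw [T1, if_neg hne]
      have e1 := ih (m+1) (by omega) (by omega) (by omega)
      have e2 := ih (m+2) (by omega) (by omega) (by omega)
      have hl : (T1 n (m+1)).getLastD 0 = n - m := by
        rw [e1]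
        have : n-(m+1)+1 = (n-m-1)+1 := by omega
        rw [this, List.range'_concat, ← List.append_assoc, List.getLastD_concat]
        omega
      have hd : (T1 n (m+2)).dropLast = List.range' (n-m+1) m ++ List.range' 1 (n-m-2) := by
        rw [e2]
        have : n-(m+2)+1 = (n-m-2)+1 := by omega
        rw [this, List.range'_concat, ← List.append_assoc, List.dropLast_concat]
        congr 2 <;> omega
      rw [hl, hd]
      have h3 : n - (m+3) + 1 = n - m - 2 := by omega
      rw [h3]
      have : List.range' (n-(m+3)+3) ((m+3)-2) = (n-m) :: List.range' (n-m+1) m := by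
        have e : n-(m+3)+3 = n - m := by omega
        have e' : (m+3)-2 = m+1 := by omega
        rw [e, e', List.range'_succ]
      rw [this]
      simp

lemma T1_last (n : ℕ) (hn : 3 < n) :
    T1 n n = List.range' 3 (n-2) ++ List.range' 1 2 := by
  have key : T1 n (n-3+3) = (T1 n (n-3+1)).getLastD 0 ::
      (if n-3+3 = n then T1 n (n-3+2) else (T1 n (n-3+2)).dropLast) := rfl
  rw [show n-3+3 = n from by omega, if_pos rfl] at key
  rw [key]
  have e1 := T1_closed n hn (n-3+1) (by omega) (by omega)
  have e2 := T1_closed n hn (n-3+2) (by omega) (by omega)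
  have hl : (T1 n (n-3+1)).getLastD 0 = 3 := by
    rw [e1]
    have : n-(n-3+1)+1 = 2+1 := by omega
    rw [this, List.range'_concat, ← List.append_assoc, List.getLastD_concat]
  rw [hl, e2]
  have e3 : n-(n-3+2)+3 = 4 := by omega
  have e4 : (n-3+2)-2 = n-3 := by omega
  have e5 : n-(n-3+2)+1 = 2 := by omega
  rw [e3, e4, e5]
  have : List.range' 3 (n-2) = 3 :: List.range' 4 (n-3) := by
    have : n-2 = (n-3)+1 := by omega
    rw [this, List.range'_succ]
  rw [this]
  simp

section Main
variable (n : ℕ)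

/-- The bijection. -/
def Bmap (n : ℕ) (x : ℕ) : ℕ := if x = 1 then 2 else if x = 2 then 1 else n + 3 - x

lemma Bmap_range' (a b : ℕ) (ha : 3 ≤ a) (hab : a + b ≤ n + 4) :
    (List.range' a b).map (Bmap n) = (List.range' (n + 4 - (a+b)) b).reverse := by
  rw [List.map_congr_left (g := fun x => n + 3 - x), range'_map_sub (n+3) b a (by omega)]
  intro x hx
  rw [List.mem_range'_1] at hx
  simp only [Bmap, if_neg (by omega : ¬ x = 1), if_neg (by omega : ¬ x = 2)]

lemma Bmap_12 : (List.range' 1 2).map (Bmap n) = [2, 1] := by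
  simp [List.range', Bmap]

lemma Bmap_T1 (hn : 3 < n) : ∀ k, 1 ≤ k → k ≤ n →
    (T1 n k).map (Bmap n) = (T1 n (n-k+1)).reverse := by
  intro k hk1 hkn
  rcases eq_or_lt_of_le hkn with rfl | hlt
  · -- k = n
    rw [show k - k + 1 = 1 from by omega, T1_last k hn]
    rw [List.map_append, Bmap_12, Bmap_range' k 3 (k-2) (by omega) (by omega)]
    rw [show k + 4 - (3 + (k-2)) = 3 from by omega]
    have : T1 k 1 = List.range' 1 2 ++ List.range' 3 (k-2) := by
      rw [show (3:ℕ) = 1 + 2 from rfl, List.range'_append_1]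
      show List.range' 1 k = _
      congr 1; omega
    rw [this, List.reverse_append]
    simp [List.range']
  · rcases eq_or_lt_of_le hk1 with rfl | hk2
    · -- k = 1
      rw [show n - 1 + 1 = n from by omega, T1_last n hn]
      have : T1 n 1 = List.range' 1 2 ++ List.range' 3 (n-2) := by
        rw [show (3:ℕ) = 1 + 2 from rfl, List.range'_append_1]
        show List.range' 1 n = _
        congr 1; omega
      rw [this, List.map_append, Bmap_12, Bmap_range' n 3 (n-2) (by omega) (by omega)]
      rw [show n + 4 - (3 + (n-2)) = 3 from by omega, List.reverse_append]
      simp [List.range']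
    · -- 2 ≤ k ≤ n-1
      rw [T1_closed n hn k hk1 (by omega), T1_closed n hn (n-k+1) (by omega) (by omega)]
      rw [show n-(n-k+1)+3 = k+2 from by omega, show (n-k+1)-2 = n-k-1 from by omega,
        show n-(n-k+1)+1 = k from by omega]
      have hsplit : List.range' 1 (n-k+1) = List.range' 1 2 ++ List.range' 3 (n-k-1) := by
        rw [show (3:ℕ) = 1 + 2 from rfl, List.range'_append_1]
        congr 1; omega
      have hsplit2 : List.range' 1 k = List.range' 1 2 ++ List.range' 3 (k-2) := by
        rw [show (3:ℕ) = 1 + 2 from rfl, List.range'_append_1]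
        congr 1; omega
      rw [hsplit, hsplit2, List.map_append, List.map_append, Bmap_12,
        Bmap_range' n (n-k+3) (k-2) (by omega) (by omega),
        Bmap_range' n 3 (n-k-1) (by omega) (by omega),
        show n+4-(n-k+3+(k-2)) = 3 from by omega,
        show n+4-(3+(n-k-1)) = k+2 from by omega]
      rw [List.reverse_append, List.reverse_append]
      simp [List.range']
end Main

lemma Bmap_bijOn (n : ℕ) (hn : 3 < n) :
    Set.BijOn (Bmap n) ↑(Finset.Icc 1 n) ↑(Finset.Icc 1 n) := by
  have hmem : ∀ x : ℕ, x ∈ (Finset.Icc 1 n : Finset ℕ) ↔ 1 ≤ x ∧ x ≤ n := by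
    intro x; simp [Finset.mem_Icc]
  have hmap : Set.MapsTo (Bmap n) ↑(Finset.Icc 1 n) ↑(Finset.Icc 1 n) := by
    intro x hx
    simp only [Finset.coe_Icc, Set.mem_Icc] at hx ⊢
    unfold Bmap
    split_ifs <;> omega
  have hinv : Set.InvOn (Bmap n) (Bmap n) ↑(Finset.Icc 1 n) ↑(Finset.Icc 1 n) := by
    constructor <;>
    · intro x hx
      simp only [Finset.coe_Icc, Set.mem_Icc] at hx
      unfold Bmap
      split_ifs <;> omega
  exact hinv.bijOn hmap hmap

lemma T1_length (n : ℕ) (hn : 3 < n) : ∀ k, 1 ≤ k → k ≤ n →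
    (T1 n k).length = if k = 1 ∨ k = n then n else n - 1 := by
  intro k hk1 hkn
  rcases eq_or_lt_of_le hkn with rfl | hlt
  · rw [T1_last k hn]; simp; omega
  · rw [T1_closed n hn k hk1 (by omega)]
    simp only [List.length_append, List.length_range']
    split_ifs with h
    · rcases h with h | h
      · subst h; omega
      · omega
    · omega

lemma T1List_getD (n : ℕ) (k : ℕ) (hk1 : 1 ≤ k) (hkn : k ≤ n) :
    (T1List n).getD (k-1) [] = T1 n k := by
  have hlen : (T1List n).length = n := by simp [T1List]
  rw [List.getD_eq_getElem _ _ (by omega)]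
  simp only [T1List, List.getElem_map, List.getElem_range]
  congr 1
  omega


/-- For every `n > 3`, the `T₁(n)` list over `A = {1,…,n}` is a
quasi-palindrome; in particular the bijection `B` defined by `B(σ₁[i]) = σ_n[n-i+1]`
for `1 ≤ i ≤ n` maps each `σ_k` to the reverse of `σ_{n-k+1}`. -/
theorem T1List_quasiPalindrome (n : ℕ) (hn : 3 < n) :
    QuasiPalindromeList (Finset.Icc 1 n) (T1List n) ∧
      ∃ B : ℕ → ℕ, Set.BijOn B ↑(Finset.Icc 1 n) ↑(Finset.Icc 1 n) ∧
        (∀ i, 1 ≤ i → i ≤ n → B ((T1 n 1).getD (i-1) 0) = (T1 n n).getD (n-i) 0) ∧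
        (∀ k, 1 ≤ k → k ≤ n → (T1 n k).map B = (T1 n (n-k+1)).reverse) := by
  have hlen1 : (T1 n 1).length = n := by
    rw [T1_length n hn 1 le_rfl (by omega)]; simp
  have hlenn : (T1 n n).length = n := by
    rw [T1_length n hn n (by omega) le_rfl]; simp
  have hmapL : (T1List n).map (List.map (Bmap n)) = ((T1List n).map List.reverse).reverse := by
    apply List.ext_getElem
    · simp [T1List]
    · intro i h1 h2
      simp only [T1List, List.getElem_map, List.getElem_reverse, List.length_reverse,
        List.length_map, List.length_range, List.getElem_range]
      simp only [T1List, List.length_map, List.length_range] at h1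
      rw [Bmap_T1 n hn (i+1) (by omega) (by omega)]
      congr 2
      omega
  have hflat : (T1List n).flatten.map (Bmap n) = (T1List n).flatten.reverse := by
    rw [List.map_flatten, hmapL, List.reverse_flatten]
  refine ⟨⟨⟨Bmap n, Bmap_bijOn n hn, hflat⟩, ?_⟩, Bmap n, Bmap_bijOn n hn, ?_, Bmap_T1 n hn⟩
  · intro k hk1 hk2
    have hL : (T1List n).length = n := by simp [T1List]
    rw [hL] at hk2 ⊢
    rw [T1List_getD n k hk1 hk2, show n - k = (n-k+1) - 1 from by omega,
      T1List_getD n (n-k+1) (by omega) (by omega)]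
    rw [T1_length n hn k hk1 hk2, T1_length n hn (n-k+1) (by omega) (by omega)]
    have : (k = 1 ∨ k = n) ↔ (n-k+1 = 1 ∨ n-k+1 = n) := by omega
    split_ifs with h1 h2 h2 <;> omega
  · intro i hi1 hin
    have hmap := Bmap_T1 n hn 1 le_rfl (by omega)
    rw [show n - 1 + 1 = n from by omega] at hmap
    have h1 : Bmap n ((T1 n 1).getD (i-1) 0) = ((T1 n 1).map (Bmap n)).getD (i-1) 0 := by
      rw [List.getD_eq_getElem _ _ (by omega : i - 1 < (T1 n 1).length),
        List.getD_eq_getElem _ _ (by simp; omega), List.getElem_map]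
    rw [h1, hmap, List.getD_eq_getElem _ _ (by simp; omega),
      List.getD_eq_getElem _ _ (by omega : n - i < (T1 n n).length), List.getElem_reverse]
    congr 1
    omega
end

section
/- Let n ≥ 6 with n ≡ 0 (mod 3) and let σ₁, …, σ_n be the T_2(n) list of sequences over A = {1, 2, …, n}. Let k be an integer with 3 < k < n−2 and k ≡ 2 (mod 3), and assume the list σ₁, …, σ_{k−2} is forward complete. Let σ' = σ_{k−1} | (n−3) be σ_{k−1} with its last two elements removed. Then for every ρ ∈ [A]_k with last element ρ[k] = n, the initial segment ρ | (k−1) is a subsequence of the concatenation σ₁σ₂⋯σ_{k−2}σ'. -/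
/-- The `T₂(n)` sequences (1-indexed): `T2 n k` is the `k`-th sequence `σ_k`,
for `n ≥ 6`, `n ≡ 0 (mod 3)`, following Definition 9 of the paper. -/
def T2 (n : ℕ) : ℕ → List ℕ
  | 0 => []
  | 1 => T1 n 1
  | 2 => T1 n 2
  | 3 => T1 n 3
  | (k+4) =>
      let K := k+4
      let p := T2 n (k+3)  -- σ_{K-1}
      let q := T2 n (k+2)  -- σ_{K-2}
      let l := p.length
      if K = n then
        -- σ_n = σ_{n-2}[-1] · σ_{n-1}[1,-1]
        q.getLastD 0 :: p
      else if K = n-1 then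
        -- σ_{n-1} = σ_{n-3}[-1] · σ_{n-2}[1,-2]
        q.getLastD 0 :: p.dropLast
      else if K = n-2 then
        -- σ_{n-2} = σ_{n-4}[-1] · σ_{n-3}[1] · σ_{n-3}[3,-2] · n
        q.getLastD 0 :: p.headD 0 :: (p.dropLast.drop 2 ++ [n])
      else if K % 3 = 1 then
        if K = 4 then
          -- σ₄ = σ₂[-1] · σ₃[2,-3] · n · σ₃[-2]
          q.getLastD 0 :: ((p.take (l-2)).drop 1 ++ [n, p.dropLast.getLastD 0])
        else
          -- σ_k = σ_{k-2}[-1] · σ_{k-1}[1] · σ_{k-1}[3,-3] · n · σ_{k-1}[-2]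
          q.getLastD 0 :: p.headD 0 :: ((p.take (l-2)).drop 2 ++ [n, p.dropLast.getLastD 0])
      else if K % 3 = 2 then
        -- σ_k = σ_{k-2}[-1] · σ_{k-1}[1,-3]
        q.getLastD 0 :: p.take (l-2)
      else
        -- σ_k = σ_{k-2}[-1] · n · σ_{k-1}[1,-2]
        q.getLastD 0 :: n :: p.dropLast

/-- The `T₂(n)` list of sequences `σ₁, σ₂, …, σ_n`. -/
def T2List (n : ℕ) : List (List ℕ) := (List.range n).map (fun i => T2 n (i+1))

/-!
For `4 ≤ j < n - 2` the sequence `σ_j` has an explicit closed form, and for every `1 ≤ j < n - 2`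
it reads `σ_j = X · (n - j) · Y · (n - j + 1)`, where `X` contains every letter except
`n - j`, `n - j + 1`, `n - j + 2` and `n`.

Write `ρ | (k - 1) = τ · d`. Forward completeness embeds `τ` into `σ₁⋯σ_{k-2}`. If `d` occurs in
`σ'` we append it there; if `d = n - k + 3` it is the last letter of `σ_{k-2}`, which the
embedding of `τ` can be made to avoid. The remaining case `d = n - k + 2` is the instance
`j = k - 2` of: `τ · (n - j)` embeds into `σ₁⋯σ_j` for every admissible `τ` of length `≤ j`
avoiding `n` and `n - j`. This is proved by induction on `j`, splitting off the last letter `c`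
of `τ`: if `c = n - j + 1` use the induction hypothesis, if `c = n - j + 2` it is the last letter
of `σ_{j-1}`, and otherwise `c` occurs in `X`, before `n - j` in `σ_j`.
-/

open List

namespace List

theorem take_length_sub_two {α : Type*} (l : List α) :
    l.take (l.length - 2) = l.dropLast.dropLast := by
  simp only [dropLast_eq_take, take_take, length_take]
  congr 1
  omega

theorem range'_one_succ (m : ℕ) : range' 1 (m + 1) = range' 1 m ++ [m + 1] := by
  rw [range'_1_concat, Nat.add_comm]

end List

namespace ForwardComplete

variable {A : Finset ℕ} {L : List (List ℕ)}

theorem take (h : ForwardComplete A L) (m : ℕ) : ForwardComplete A (L.take m) := by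
  intro k hk hkm
  rw [List.take_take, Nat.min_eq_left (by simp at hkm; omega)]
  exact h k hk (by simp at hkm; omega)

theorem sublist_flatten (h : ForwardComplete A L) {τ : List ℕ} (hτ : τ.Nodup)
    (hA : ∀ a ∈ τ, a ∈ A) (hlen : τ.length ≤ L.length) : τ.Sublist L.flatten := by
  cases τ with
  | nil => exact nil_sublist _
  | cons a τ =>
    exact (h _ (by simp) hlen _ ⟨rfl, hτ, hA⟩).trans (take_prefix _ _).flatten.sublist

end ForwardComplete

theorem T2_one (n : ℕ) : T2 n 1 = range' 1 n := rfl

theorem T2_two (n : ℕ) : T2 n 2 = range' 1 (n - 1) := rfl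

theorem T2_three (m : ℕ) : T2 (m + 4) 3 = (m + 4) :: range' 1 (m + 2) := by
  simp [T2, T1, range'_one_succ]

/-- `T2ClosedForm a b` is `σ_j` of `T₂(n)` for `j = a + 4` and `n = a + b + 7`, so that
`n - j = b + 3`; the three cases are `j ≡ 1, 2, 0 (mod 3)`. -/
def T2ClosedForm (a b : ℕ) : List ℕ :=
  if a % 3 = 0 then range' (b + 6) (a + 1) ++ range' 1 (b + 2) ++ [b + 3, a + b + 7, b + 4]
  else if a % 3 = 1 then range' (b + 6) (a + 1) ++ range' 1 (b + 2) ++ [b + 3, b + 4]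
  else (b + 6) :: (a + b + 7) :: (range' (b + 7) a ++ range' 1 (b + 2) ++ [b + 3, b + 4])

theorem T2_eq_closedForm : ∀ a b, T2 (a + b + 7) (a + 4) = T2ClosedForm a b
  | 0, b => by
    rw [T2]
    simp only [take_length_sub_two]
    rw [T2_two, show 0 + b + 7 = b + 3 + 4 by omega, T2_three]
    simp +arith [T2ClosedForm, range'_one_succ, dropLast_cons_of_ne_nil, getLast?_cons]
  | 1, b => by
    rw [T2]
    simp only [take_length_sub_two]
    rw [show 1 + b + 7 = b + 4 + 4 by omega, T2_three,
      show b + 4 + 4 = 0 + (b + 1) + 7 by omega, T2_eq_closedForm 0]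
    simp +arith [T2ClosedForm, range'_one_succ, dropLast_cons_of_ne_nil, getLast?_cons,
      range'_succ (s := b + 6)]
  | a + 2, b => by
    have hp := T2_eq_closedForm (a + 1) (b + 1)
    have hq := T2_eq_closedForm a (b + 2)
    rw [show a + 1 + (b + 1) + 7 = a + 2 + b + 7 by omega] at hp
    rw [show a + (b + 2) + 7 = a + 2 + b + 7 by omega] at hq
    have h3 : ¬ a + 2 + 4 = a + 2 + b + 7 := by omega
    have h4 : ¬ a + 2 + 4 = a + 2 + b + 7 - 1 := by omega
    have h5 : ¬ a + 2 + 4 = a + 2 + b + 7 - 2 := by omega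
    rw [T2]
    simp only [h3, h4, h5, if_false, take_length_sub_two, hp, hq]
    rcases (by omega : a % 3 = 0 ∨ a % 3 = 1 ∨ a % 3 = 2) with h | h | h <;>
      simp +arith [T2ClosedForm, h, Nat.add_mod, range'_one_succ, range'_succ (s := b + 6),
        range'_succ (s := b + 7), dropLast_cons_of_ne_nil, getLast?_cons]

theorem exists_T2_eq_append_cons {n j : ℕ} (hj : 1 ≤ j) (hjn : j + 2 < n) :
    ∃ X Y, T2 n j = X ++ (n - j) :: Y ++ [n - j + 1] ∧
      ∀ c, 1 ≤ c ∧ c < n - j ∨ n - j + 2 < c ∧ c < n → c ∈ X := by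
  rcases (by omega : j = 1 ∨ j = 2 ∨ j = 3 ∨ 4 ≤ j) with rfl | rfl | rfl | hj4
  · obtain ⟨m, rfl⟩ : ∃ m, n = m + 2 := ⟨n - 2, by omega⟩
    refine ⟨range' 1 m, [], by simp [T2_one, range'_one_succ], fun c hc => ?_⟩
    simp; omega
  · obtain ⟨m, rfl⟩ : ∃ m, n = m + 3 := ⟨n - 3, by omega⟩
    refine ⟨range' 1 m, [], by simp [T2_two, range'_one_succ], fun c hc => ?_⟩
    simp; omega
  · obtain ⟨m, rfl⟩ : ∃ m, n = m + 4 := ⟨n - 4, by omega⟩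
    refine ⟨(m + 4) :: range' 1 m, [], by simp [T2_three, range'_one_succ], fun c hc => ?_⟩
    simp; omega
  · obtain ⟨a, rfl⟩ : ∃ a, j = a + 4 := ⟨j - 4, by omega⟩
    obtain ⟨b, rfl⟩ : ∃ b, n = a + b + 7 := ⟨n - a - 7, by omega⟩
    rw [T2_eq_closedForm, show a + b + 7 - (a + 4) = b + 3 by omega]
    rcases (by omega : a % 3 = 0 ∨ a % 3 = 1 ∨ a % 3 = 2) with h | h | h
    · refine ⟨range' (b + 6) (a + 1) ++ range' 1 (b + 2), [a + b + 7],
        by simp [T2ClosedForm, h], fun c hc => ?_⟩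
      simp; omega
    · refine ⟨range' (b + 6) (a + 1) ++ range' 1 (b + 2), [],
        by simp [T2ClosedForm, h], fun c hc => ?_⟩
      simp; omega
    · refine ⟨(b + 6) :: (a + b + 7) :: (range' (b + 7) a ++ range' 1 (b + 2)), [],
        by simp [T2ClosedForm, h], fun c hc => ?_⟩
      simp; omega

theorem mem_take_T2_of_mod_three_eq_one {n j c : ℕ} (hj : 4 ≤ j) (hjn : j + 2 < n)
    (hj3 : j % 3 = 1) (hc : 1 ≤ c ∧ c ≤ n - j ∨ n - j + 2 < c ∧ c < n) :
    c ∈ (T2 n j).take (n - 3) := by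
  obtain ⟨a, rfl⟩ : ∃ a, j = a + 4 := ⟨j - 4, by omega⟩
  obtain ⟨b, rfl⟩ : ∃ b, n = a + b + 7 := ⟨n - a - 7, by omega⟩
  rw [T2_eq_closedForm, T2ClosedForm, if_pos (by omega),
    show range' (b + 6) (a + 1) ++ range' 1 (b + 2) ++ [b + 3, a + b + 7, b + 4] =
      (range' (b + 6) (a + 1) ++ range' 1 (b + 2) ++ [b + 3]) ++ [a + b + 7, b + 4] by simp,
    take_left' (by simp; omega)]
  simp
  omega

def T2Concat (n j : ℕ) : List ℕ := ((T2List n).take j).flatten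

theorem T2Concat_succ {n j : ℕ} (h : j < n) :
    T2Concat n (j + 1) = T2Concat n j ++ T2 n (j + 1) := by
  simp [T2Concat, T2List, take_add_one, h]

theorem exists_T2Concat_eq_append {n j : ℕ} (hj : 1 ≤ j) (hjn : j + 2 < n) :
    ∃ P, T2Concat n j = P ++ [n - j + 1] := by
  obtain ⟨i, rfl⟩ : ∃ i, j = i + 1 := ⟨j - 1, by omega⟩
  obtain ⟨X, Y, hXY, -⟩ := exists_T2_eq_append_cons hj hjn
  exact ⟨T2Concat n i ++ X ++ (n - (i + 1)) :: Y, by simp [T2Concat_succ (by omega : i < n), hXY]⟩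

theorem append_singleton_sublist_T2Concat_append {n j c : ℕ} {α Z : List ℕ} (hj : 1 ≤ j)
    (hjn : j + 2 < n) (hfc : ForwardComplete (Finset.Icc 1 n) ((T2List n).take j))
    (hα : α.Nodup) (hαA : ∀ a ∈ α, a ∈ Finset.Icc 1 n) (hlen : α.length ≤ j) (hcα : c ∉ α)
    (hZ : c ≠ n - j + 1 → c ∈ Z) : (α ++ [c]).Sublist (T2Concat n j ++ Z) := by
  have hαF : α.Sublist (T2Concat n j) := hfc.sublist_flatten hα hαA (by simp [T2List]; omega)
  by_cases hc : c = n - j + 1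
  · obtain ⟨P, hP⟩ := exists_T2Concat_eq_append hj hjn
    rw [hP, ← hc] at hαF ⊢
    have hαP := hαF.of_sublist_append_left fun a ha => by
      simp only [mem_singleton]; rintro rfl; exact hcα ha
    exact (hαP.append (Sublist.refl [c])).trans (sublist_append_left _ _)
  · exact hαF.append (singleton_sublist.2 (hZ hc))

theorem append_sub_sublist_T2Concat {n j : ℕ} (hj : 1 ≤ j) (hjn : j + 2 < n)
    (hfc : ForwardComplete (Finset.Icc 1 n) ((T2List n).take j)) {τ : List ℕ} (hτ : τ.Nodup)
    (hτA : ∀ a ∈ τ, a ∈ Finset.Icc 1 n) (hlen : τ.length ≤ j) (hnτ : n ∉ τ) (hjτ : n - j ∉ τ) :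
    (τ ++ [n - j]).Sublist (T2Concat n j) := by
  induction j generalizing τ with
  | zero => omega
  | succ j ih =>
    obtain ⟨X, Y, hXY, hX⟩ := exists_T2_eq_append_cons hj hjn
    rw [T2Concat_succ (by omega), hXY]
    obtain rfl | ⟨α, c, rfl⟩ := τ.eq_nil_or_concat
    · simp
    simp only [concat_eq_append, nodup_append, mem_singleton, mem_append, length_append,
      length_singleton, forall_eq, not_or] at hτ hτA hlen hnτ hjτ ⊢
    obtain ⟨hα, -, hcα⟩ := hτ
    have hcA := Finset.mem_Icc.1 (hτA c (.inr rfl))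
    have hαc : (α ++ [c]).Sublist (T2Concat n j ++ X) := by
      rcases Nat.eq_zero_or_pos j with rfl | hj1
      · rw [length_eq_zero_iff.1 (by omega : α.length = 0)]
        simpa [T2Concat] using hX c (by omega)
      have hfc' : ForwardComplete (Finset.Icc 1 n) ((T2List n).take j) := by
        simpa [take_take] using hfc.take j
      by_cases hcj : c = n - j
      · subst hcj
        exact (ih hj1 (by omega) hfc' hα (fun a ha => hτA a (.inl ha)) (by omega) hnτ.1
          (fun h => hcα _ h rfl)).trans (sublist_append_left _ _)
      · exact append_singleton_sublist_T2Concat_append hj1 (by omega) hfc' hα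
          (fun a ha => hτA a (.inl ha)) (by omega) (fun h => hcα _ h rfl) (fun _ => hX c (by omega))
    simpa using hαc.append (singleton_sublist.2 (mem_append_left _ (mem_cons_self ..)) :
      [n - (j + 1)] <+ (n - (j + 1)) :: Y ++ [n - (j + 1) + 1])

theorem T2_claim14_general (n : ℕ)
    (k : ℕ) (hk1 : 3 < k) (hk2 : k < n - 2) (hk3 : k % 3 = 2)
    (hfc : ForwardComplete (Finset.Icc 1 n) ((T2List n).take (k-2)))
    (ρ : List ℕ) (hρ : DistinctSeq (Finset.Icc 1 n) k ρ)
    (hlast : ρ.getLastD 0 = n) :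
    (ρ.take (k-1)).Sublist ((((T2List n).take (k-2)).flatten) ++ (T2 n (k-1)).take (n-3)) := by
  obtain ⟨hlen, hnd, hA⟩ := hρ
  obtain rfl | ⟨γ, z, rfl⟩ := ρ.eq_nil_or_concat
  · simp at hlen; omega
  obtain rfl | ⟨τ, d, rfl⟩ := γ.eq_nil_or_concat
  · simp at hlen; omega
  simp only [concat_eq_append, getLastD_concat] at hlast ⊢
  subst z
  simp only [concat_eq_append, nodup_append, mem_singleton, mem_append, length_append,
    length_singleton, forall_eq] at hlen hnd hA
  obtain ⟨⟨hτ, -, hdτ⟩, -, hτdn⟩ := hnd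
  rw [take_left' (by simp; omega)]
  have hdA := Finset.mem_Icc.1 (hA d (.inl (.inr rfl)))
  have hdn := hτdn d (.inr rfl)
  by_cases hd : d = n - (k - 2)
  · subst hd
    exact (append_sub_sublist_T2Concat (by omega) (by omega) hfc hτ
      (fun a ha => hA a (.inl (.inl ha))) (by omega) (fun h => hτdn _ (.inl h) rfl)
      (fun h => hdτ _ h rfl)).trans (sublist_append_left _ _)
  · exact append_singleton_sublist_T2Concat_append (by omega) (by omega) hfc hτ
      (fun a ha => hA a (.inl (.inl ha))) (by omega) (fun h => hdτ _ h rfl)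
      fun h => mem_take_T2_of_mod_three_eq_one (by omega) (by omega) (by omega) (by omega)

/-- **Claim 14.** Let `n ≥ 6`, `n ≡ 0 (mod 3)`, and let `σ₁,…,σ_n` be
the `T₂(n)` list over `A = {1,…,n}`. Let `3 < k < n-2` with `k ≡ 2 (mod 3)` and
assume `σ₁,…,σ_{k-2}` is forward complete. Let `σ' = σ_{k-1} | (n-3)` be `σ_{k-1}`
with its last two elements removed. Then for every `ρ ∈ [A]_k` with last element `n`,
`ρ | (k-1)` is a subsequence of `σ₁σ₂⋯σ_{k-2}σ'`. -/
theorem T2_claim14 (n : ℕ) (hn : 6 ≤ n) (hn3 : n % 3 = 0)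
    (k : ℕ) (hk1 : 3 < k) (hk2 : k < n - 2) (hk3 : k % 3 = 2)
    (hfc : ForwardComplete (Finset.Icc 1 n) ((T2List n).take (k-2)))
    (ρ : List ℕ) (hρ : DistinctSeq (Finset.Icc 1 n) k ρ)
    (hlast : ρ.getLastD 0 = n) :
    (ρ.take (k-1)).Sublist ((((T2List n).take (k-2)).flatten) ++ (T2 n (k-1)).take (n-3)) :=
  T2_claim14_general n k hk1 hk2 hk3 hfc ρ hρ hlast
end

section
/- Let s ≥ 3 and n ≥ 4s+1 with n ≡ 3 (mod 2s−1), and let σ₁, …, σ_n be the T_s(n) list of sequences over A = {1, 2, …, n}. Set m = n+1 and t = (m−2s−3)/(2s−1). Then the total length of the concatenation σ₁σ₂⋯σ_n equals 2(m−1) + (2s + t(2s−2))(m−2) + t(m−s−1). -/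
/-- The sequence of skip letters `φ_s = ⟨n-s+2, …, n-1, n⟩`. -/
def skipSeq (s n : ℕ) : List ℕ := List.range' (n-s+2) (s-1)

/-- The `T_s(n)` sequences (1-indexed): `Ts s n k` is the `k`-th sequence `σ_k`,
for `s ≥ 3`, `n ≥ 4s+1`, `n ≡ 3 (mod 2s-1)`, following Definition 17 of the paper. -/
def Ts (s n : ℕ) : ℕ → List ℕ
  | 0 => []
  | 1 => T1 n 1
  | (k+2) =>
      let K := k+2
      if K ≤ s+1 then T1 n K
      else
        let p := Ts s n (k+1)  -- σ_{K-1}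
        let q := Ts s n k      -- σ_{K-2}
        let l := p.length
        let φ := skipSeq s n
        if K = n then
          -- σ_n = σ_{n-2}[-1] · σ_{n-1}[1,-1]
          q.getLastD 0 :: p
        else if n-s < K then
          -- σ_{n-s+i} = σ_{n-s+i-2}[-1] · σ_{n-s+i-1}[1,-2]  (1 ≤ i < s)
          q.getLastD 0 :: p.dropLast
        else if K = n-s then
          -- σ_{n-s} = σ_{n-s-2}[-1] · σ_{n-s-1}[1,s-1] · σ_{n-s-1}[2s-1,-2] · φ_{-s}
          q.getLastD 0 :: (p.take (s-1) ++ (p.dropLast.drop (2*s-2)) ++ φ.reverse)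
        else if K % (2*s-1) = (s+2) % (2*s-1) then
          if K = s+2 then
            -- σ_k = σ_{k-2}[-1] · σ_{k-1}[s,-s-1] · φ_s · σ_{k-1}[-s,-2]
            q.getLastD 0 ::
              (((p.take (l-s)).drop (s-1)) ++ φ ++ ((p.take (l-1)).drop (l-s)))
          else
            -- σ_k = σ_{k-2}[-1] · σ_{k-1}[1,s-1] · σ_{k-1}[2s-1,-s-1] · φ_s · σ_{k-1}[-s,-2]
            q.getLastD 0 ::
              (p.take (s-1) ++ ((p.take (l-s)).drop (2*s-2)) ++ φ ++
                ((p.take (l-1)).drop (l-s)))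
        else if K % (2*s-1) = 2 then
          -- σ_k = σ_{k-2}[-1] · σ_{k-1}[1,-s-1]  (all skip letters removed)
          q.getLastD 0 :: p.take (l-s)
        else if K % (2*s-1) = 3 then
          -- σ_k = σ_{k-2}[-1] · φ_{-s} · σ_{k-1}[1,-2]
          q.getLastD 0 :: (φ.reverse ++ p.dropLast)
        else
          -- σ_k = σ_{k-2}[-1] · σ_{k-1}[1,-2]
          q.getLastD 0 :: p.dropLast

/-- The `T_s(n)` list of sequences `σ₁, σ₂, …, σ_n`. -/
def TsList (s n : ℕ) : List (List ℕ) := (List.range n).map (fun i => Ts s n (i+1))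

lemma len_T1 (n : ℕ) : ∀ k, 2 ≤ k → k < n → (T1 n k).length = n - 1 := by
  intro k
  induction k using Nat.strong_induction_on with
  | _ k ih =>
  match k with
  | 0 => intro h; omega
  | 1 => intro h hh; omega
  | 2 => intro _ h; simp [T1]
  | (j+3) =>
    intro _ h
    rw [T1, if_neg (by omega)]
    have := ih (j+2) (by omega) (by omega) (by omega)
    simp only [List.length_cons, List.length_dropLast, this]
    omega

lemma len_Ts (s n : ℕ) (hs : 3 ≤ s) (hn : 4*s+1 ≤ n) (hmod : n % (2*s-1) = 3) :
    ∀ k, 1 ≤ k → k ≤ n →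
      (Ts s n k).length =
        if k = 1 ∨ k = n then n
        else if s+1 < k ∧ k < n-s ∧ k % (2*s-1) = 2 then n-s
        else n-1 := by
  intro k
  induction k using Nat.strong_induction_on with
  | _ k ih =>
  match k with
  | 0 => intro h; omega
  | 1 =>
    intro _ _
    rw [if_pos (Or.inl rfl)]
    show (T1 n 1).length = n
    simp [T1]
  | (j+2) =>
    intro h1 h2
    rw [Ts.eq_3]
    by_cases hA : j+2 ≤ s+1
    · rw [if_pos hA, len_T1 n (j+2) (by omega) (by omega),
        if_neg (by omega), if_neg (by rintro ⟨hx, -, -⟩; omega)]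
    · rw [if_neg hA]
      push_neg at hA
      dsimp only
      have hphi : (skipSeq s n).length = s - 1 := by simp [skipSeq]
      have hp0 := ih (j+1) (by omega) (by omega) (by omega)
      by_cases hB : j+2 = n
      · rw [if_pos hB]
        rw [if_neg (by omega), if_neg (by rintro ⟨-, hx, -⟩; omega)] at hp0
        simp only [List.length_cons, hp0]
        rw [if_pos (Or.inr hB)]
        omega
      · rw [if_neg hB]
        by_cases hC : n - s < j+2
        · rw [if_pos hC]
          rw [if_neg (by omega), if_neg (by rintro ⟨-, hx, -⟩; omega)] at hp0
          simp only [List.length_cons, List.length_dropLast, hp0]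
          rw [if_neg (by omega), if_neg (by rintro ⟨-, hx, -⟩; omega)]
          omega
        · push_neg at hC
          rw [if_neg (by omega)]
          obtain ⟨qn, hqn⟩ : ∃ q, n = (2*s-1)*q + 3 :=
            ⟨n/(2*s-1), by rw [← hmod]; exact (Nat.div_add_mod n (2*s-1)).symm⟩
          have hqn2 : 2 ≤ qn := by
            by_contra hq
            have h5 : (2*s-1)*qn ≤ (2*s-1)*1 := Nat.mul_le_mul_left _ (by omega)
            generalize (2*s-1)*qn = x at *
            omega
          obtain ⟨q2, rfl⟩ : ∃ q2, qn = q2 + 2 := ⟨qn - 2, by omega⟩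
          have hnq : n = (2*s-1)*q2 + (4*s+1) := by
            have e1 : (2*s-1)*(q2+2) = (2*s-1)*q2 + (2*s-1)*2 := Nat.mul_add _ _ _
            generalize (2*s-1)*(q2+2) = x at *
            generalize (2*s-1)*q2 = y at *
            omega
          by_cases hD : j+2 = n - s
          · rw [if_pos hD]
            have hmodp : (j+1) % (2*s-1) = s+1 := by
              have e1 : (2*s-1)*(q2+1) = (2*s-1)*q2 + (2*s-1)*1 := Nat.mul_add _ _ _
              have e : j+1 = (2*s-1)*(q2+1) + (s+1) := by
                generalize (2*s-1)*(q2+1) = x at *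
                generalize (2*s-1)*q2 = y at *
                omega
              rw [e, Nat.mul_add_mod]
              exact Nat.mod_eq_of_lt (by omega)
            rw [if_neg (by omega), if_neg (by rintro ⟨-,-,hx⟩; rw [hmodp] at hx; omega)] at hp0
            simp only [List.length_cons, List.length_append, List.length_take,
              List.length_drop, List.length_dropLast, List.length_reverse, hphi, hp0]
            rw [if_neg (by omega), if_neg (by rintro ⟨-,hx,-⟩; omega)]
            omega
          · rw [if_neg hD]
            by_cases hE : (j+2) % (2*s-1) = (s+2) % (2*s-1)
            · rw [if_pos hE]
              have hmodp : (j+1) % (2*s-1) ≠ 2 := by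
                rcases Nat.lt_or_ge (s+2) (2*s-1) with hlt | hge
                · rw [Nat.mod_eq_of_lt hlt] at hE
                  obtain ⟨q, hq⟩ : ∃ q, j+2 = (2*s-1)*q + (s+2) :=
                    ⟨(j+2)/(2*s-1), by have h9 := (Nat.div_add_mod (j+2) (2*s-1)).symm; rw [hE] at h9; exact h9⟩
                  have e : j+1 = (2*s-1)*q + (s+1) := by
                    generalize (2*s-1)*q = x at *; omega
                  rw [e, Nat.mul_add_mod, Nat.mod_eq_of_lt (by omega)]
                  omega
                · have hs3 : s = 3 := by omega
                  subst hs3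
                  norm_num at hE ⊢
                  omega
              have hne2 : (j+2) % (2*s-1) ≠ 2 := by
                rcases Nat.lt_or_ge (s+2) (2*s-1) with hlt | hge
                · rw [hE, Nat.mod_eq_of_lt hlt]; omega
                · have hs3 : s = 3 := by omega
                  subst hs3
                  norm_num at hE ⊢
                  omega
              rw [if_neg (by omega), if_neg (by rintro ⟨-,-,hx⟩; exact hmodp hx)] at hp0
              by_cases hF : j+2 = s+2
              · rw [if_pos hF]
                simp only [List.length_cons, List.length_append, List.length_take,
                  List.length_drop, hphi, hp0]
                rw [if_neg (by omega), if_neg (by rintro ⟨-,-,hx⟩; exact hne2 hx)]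
                omega
              · rw [if_neg hF]
                simp only [List.length_cons, List.length_append, List.length_take,
                  List.length_drop, hphi, hp0]
                rw [if_neg (by omega), if_neg (by rintro ⟨-,-,hx⟩; exact hne2 hx)]
                omega
            · rw [if_neg hE]
              by_cases hG : (j+2) % (2*s-1) = 2
              · rw [if_pos hG]
                obtain ⟨q, hq⟩ : ∃ q, j+2 = (2*s-1)*q + 2 :=
                  ⟨(j+2)/(2*s-1), by have h9 := (Nat.div_add_mod (j+2) (2*s-1)).symm; rw [hG] at h9; exact h9⟩
                have hmodp : (j+1) % (2*s-1) = 1 := by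
                  have e : j+1 = (2*s-1)*q + 1 := by
                    generalize (2*s-1)*q = x at *; omega
                  rw [e, Nat.mul_add_mod]
                  exact Nat.mod_eq_of_lt (by omega)
                rw [if_neg (by omega), if_neg (by rintro ⟨-,-,hx⟩; rw [hmodp] at hx; omega)] at hp0
                simp only [List.length_cons, List.length_take, hp0]
                rw [if_neg (by omega), if_pos ⟨by omega, by omega, hG⟩]
                omega
              · rw [if_neg hG]
                by_cases hH : (j+2) % (2*s-1) = 3
                · rw [if_pos hH]
                  obtain ⟨q, hq⟩ : ∃ q, j+2 = (2*s-1)*q + 3 :=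
                    ⟨(j+2)/(2*s-1), by have h9 := (Nat.div_add_mod (j+2) (2*s-1)).symm; rw [hH] at h9; exact h9⟩
                  have hq1 : 1 ≤ q := by
                    rcases Nat.eq_zero_or_pos q with rfl | h
                    · simp at hq; omega
                    · exact h
                  have hqb : (2*s-1)*1 ≤ (2*s-1)*q := Nat.mul_le_mul_left _ hq1
                  have hge : 2*s+2 ≤ j+2 := by
                    generalize (2*s-1)*q = x at hq hqb
                    omega
                  have hmodp : (j+1) % (2*s-1) = 2 := by
                    have e : j+1 = (2*s-1)*q + 2 := by
                      generalize (2*s-1)*q = x at *; omega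
                    rw [e, Nat.mul_add_mod]
                    exact Nat.mod_eq_of_lt (by omega)
                  rw [if_neg (by omega), if_pos ⟨by omega, by omega, hmodp⟩] at hp0
                  simp only [List.length_cons, List.length_append, List.length_reverse,
                    List.length_dropLast, hphi, hp0]
                  rw [if_neg (by omega), if_neg (by rintro ⟨-,-,hx⟩; exact absurd (hH.symm.trans hx) (by omega))]
                  omega
                · rw [if_neg hH]
                  have hmodp : (j+1) % (2*s-1) ≠ 2 := by
                    intro hc
                    obtain ⟨q, hq⟩ : ∃ q, j+1 = (2*s-1)*q + 2 :=
                      ⟨(j+1)/(2*s-1), by have h9 := (Nat.div_add_mod (j+1) (2*s-1)).symm; rw [hc] at h9; exact h9⟩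
                    have e : (j+2) % (2*s-1) = 3 := by
                      have e2 : j+2 = (2*s-1)*q + 3 := by
                        generalize (2*s-1)*q = x at *; omega
                      rw [e2, Nat.mul_add_mod]
                      exact Nat.mod_eq_of_lt (by omega)
                    exact hH e
                  rw [if_neg (by omega), if_neg (by rintro ⟨-,-,hx⟩; exact hmodp hx)] at hp0
                  simp only [List.length_cons, List.length_dropLast, hp0]
                  rw [if_neg (by omega), if_neg (by rintro ⟨-,-,hx⟩; exact hG hx)]
                  omega

lemma list_sum_range (g : ℕ → ℕ) (n : ℕ) :
    ((List.range n).map g).sum = ∑ i ∈ Finset.range n, g i := by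
  induction n with
  | zero => simp
  | succ n ih => rw [List.range_succ, Finset.sum_range_succ, List.map_append, List.sum_append, ih]; simp

/-- Let `s ≥ 3`, `n ≥ 4s+1`, `n ≡ 3 (mod 2s-1)`, `m = n+1` and
`t = (m-2s-3)/(2s-1)`. Then the total length of the concatenation `σ₁σ₂⋯σ_n` of the
`T_s(n)` list equals `2(m-1) + (2s + t(2s-2))(m-2) + t(m-s-1)`. -/
theorem TsList_flatten_length (s n : ℕ) (hs : 3 ≤ s) (hn : 4*s+1 ≤ n)
    (hmod : n % (2*s-1) = 3) (m t : ℕ) (hm : m = n+1) (ht : t = (m-2*s-3)/(2*s-1)) :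
    ((TsList s n).flatten).length =
      2*(m-1) + (2*s + t*(2*s-2))*(m-2) + t*(m-s-1) := by
  subst hm
  obtain ⟨qn, hqn⟩ : ∃ q, n = (2*s-1)*q + 3 :=
    ⟨n/(2*s-1), by rw [← hmod]; exact (Nat.div_add_mod n (2*s-1)).symm⟩
  have hqn2 : 2 ≤ qn := by
    by_contra hq
    have h5 : (2*s-1)*qn ≤ (2*s-1)*1 := Nat.mul_le_mul_left _ (by omega)
    generalize (2*s-1)*qn = x at *
    omega
  obtain ⟨u, rfl⟩ : ∃ u, qn = u + 2 := ⟨qn - 2, by omega⟩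
  have hnu : n = (2*s-1)*u + (4*s+1) := by
    have e1 : (2*s-1)*(u+2) = (2*s-1)*u + (2*s-1)*2 := Nat.mul_add _ _ _
    generalize (2*s-1)*(u+2) = x at *
    generalize (2*s-1)*u = y at *
    omega
  have hT : t = u + 1 := by
    rw [ht]
    have e1 : (2*s-1)*(u+1) = (2*s-1)*u + (2*s-1)*1 := Nat.mul_add _ _ _
    have e : n+1-2*s-3 = (2*s-1)*(u+1) := by
      generalize (2*s-1)*(u+1) = x at *
      generalize (2*s-1)*u = y at *
      omega
    rw [e, Nat.mul_div_cancel_left _ (by omega : 0 < 2*s-1)]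
  subst hT
  -- flatten to sum
  have h0 : ((TsList s n).flatten).length = ∑ i ∈ Finset.range n, (Ts s n (i+1)).length := by
    rw [TsList, List.length_flatten, List.map_map]
    exact list_sum_range _ n
  rw [h0]
  have h1 : ∀ i ∈ Finset.range n, (Ts s n (i+1)).length =
      (n-s) + ((if s+1 < i+1 ∧ i+1 < n-s ∧ (i+1) % (2*s-1) = 2 then 0 else s-1)
        + (if i+1 = 1 ∨ i+1 = n then 1 else 0)) := by
    intro i hi
    rw [Finset.mem_range] at hi
    rw [len_Ts s n hs hn hmod (i+1) (by omega) (by omega)]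
    generalize (i+1) % (2*s-1) = r
    split_ifs <;> omega
  rw [Finset.sum_congr rfl h1, Finset.sum_add_distrib, Finset.sum_add_distrib,
    Finset.sum_const, Finset.card_range, smul_eq_mul]
  -- the short count
  have hcard : ((Finset.range n).filter
      (fun i => s+1 < i+1 ∧ i+1 < n-s ∧ (i+1) % (2*s-1) = 2)).card = u+1 := by
    have himg : (Finset.range n).filter
        (fun i => s+1 < i+1 ∧ i+1 < n-s ∧ (i+1) % (2*s-1) = 2)
        = (Finset.Icc 1 (u+1)).image (fun j => (2*s-1)*j + 1) := by
      ext k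
      simp only [Finset.mem_filter, Finset.mem_range, Finset.mem_image, Finset.mem_Icc]
      constructor
      · rintro ⟨hk, hb1, hb2, hb3⟩
        obtain ⟨q, hqd⟩ : ∃ q, k+1 = (2*s-1)*q + 2 :=
          ⟨(k+1)/(2*s-1), by have h9 := (Nat.div_add_mod (k+1) (2*s-1)).symm; rw [hb3] at h9; exact h9⟩
        have hql : 1 ≤ q := by
          rcases Nat.eq_zero_or_pos q with rfl | h
          · simp at hqd; omega
          · exact h
        have hqu : q ≤ u+1 := by
          by_contra hcc
          push_neg at hcc
          have h5 : (2*s-1)*(u+2) ≤ (2*s-1)*q := Nat.mul_le_mul_left _ hcc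
          have e2 : (2*s-1)*(u+2) = (2*s-1)*u + (2*s-1)*2 := Nat.mul_add _ _ _
          generalize (2*s-1)*(u+2) = x at *
          generalize (2*s-1)*q = y at *
          generalize (2*s-1)*u = z at *
          omega
        refine ⟨q, ⟨hql, hqu⟩, ?_⟩
        generalize (2*s-1)*q = y at *
        omega
      · rintro ⟨j, ⟨hj1, hju⟩, rfl⟩
        have hmo : ((2*s-1)*j + 1 + 1) % (2*s-1) = 2 := by
          rw [show (2*s-1)*j + 1 + 1 = (2*s-1)*j + 2 from rfl, Nat.mul_add_mod]
          exact Nat.mod_eq_of_lt (by omega)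
        have hb1 : (2*s-1)*1 ≤ (2*s-1)*j := Nat.mul_le_mul_left _ hj1
        have hb2 : (2*s-1)*j ≤ (2*s-1)*(u+1) := Nat.mul_le_mul_left _ hju
        have e2 : (2*s-1)*(u+1) = (2*s-1)*u + (2*s-1)*1 := Nat.mul_add _ _ _
        refine ⟨?_, ?_, ?_, hmo⟩ <;>
        · generalize (2*s-1)*j = y at hb1 hb2 ⊢
          generalize (2*s-1)*(u+1) = x at *
          generalize (2*s-1)*u = z at *
          omega
    rw [himg, Finset.card_image_of_injective _ (fun a b hab => by
      simp only [Nat.add_right_cancel_iff] at hab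
      exact Nat.eq_of_mul_eq_mul_left (by omega) hab), Nat.card_Icc]
    omega
  have hc1 : (∑ i ∈ Finset.range n,
      if s+1 < i+1 ∧ i+1 < n-s ∧ (i+1) % (2*s-1) = 2 then 0 else s-1) = (n - (u+1)) * (s-1) := by
    rw [Finset.sum_ite, Finset.sum_const_zero, Finset.sum_const, smul_eq_mul, zero_add]
    congr 1
    have := Finset.card_filter_add_card_filter_not
      (s := Finset.range n) (fun i => s+1 < i+1 ∧ i+1 < n-s ∧ (i+1) % (2*s-1) = 2)
    rw [hcard, Finset.card_range] at this
    omega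
  have hc2 : (∑ i ∈ Finset.range n, if i+1 = 1 ∨ i+1 = n then (1:ℕ) else 0) = 2 := by
    rw [Finset.sum_boole]
    have : (Finset.range n).filter (fun i => i+1 = 1 ∨ i+1 = n) = {0, n-1} := by
      ext k
      simp only [Finset.mem_filter, Finset.mem_range, Finset.mem_insert, Finset.mem_singleton]
      omega
    rw [this, Finset.card_insert_of_notMem (by simp; omega), Finset.card_singleton]
    rfl
  rw [hc1, hc2]
  -- final arithmetic
  obtain ⟨b, rfl⟩ : ∃ b, s = b + 3 := ⟨s - 3, by omega⟩
  rw [show 2*(b+3)-1 = 2*b+5 from by omega] at hnu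
  have e1 : n - (b+3) = (2*b+5)*u + (3*b+10) := by
    generalize (2*b+5)*u = X at hnu ⊢; omega
  have e2 : n - (u+1) = (2*b+5)*u + (4*b+13) - (u+1) := by omega
  have e2' : (2*b+5)*u + (4*b+13) - (u+1) = (2*b+4)*u + (4*b+12) := by
    have : (2*b+5)*u = (2*b+4)*u + u := by ring
    generalize (2*b+5)*u = X at this ⊢
    generalize (2*b+4)*u = Y at this ⊢
    omega
  have e3 : n + 1 - 1 = n := by omega
  have e4 : n + 1 - 2 = (2*b+5)*u + (4*b+12) := by
    generalize (2*b+5)*u = X at hnu ⊢; omega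
  have e5 : n + 1 - (b+3) - 1 = (2*b+5)*u + (3*b+10) := by
    generalize (2*b+5)*u = X at hnu ⊢; omega
  have e6 : (b+3) - 1 = b+2 := by omega
  have e7 : 2*(b+3) - 2 = 2*b+4 := by omega
  rw [e1, e2, e2', e3, e4, e5, e6, e7, hnu]
  ring
end
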